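/- For every rational number q, the number sin(π q) is algebraic. -/
import Mathlib

open Real Polynomial

lemma aeval_chebT (x : ℝ) (n : ℤ) :
    Polynomial.aeval x (Polynomial.Chebyshev.T ℚ n) = (Polynomial.Chebyshev.T ℝ n).eval x := by
  rw [Polynomial.aeval_def, ← Polynomial.eval_map, Polynomial.Chebyshev.map_T]

lemma cos_rat_mul_pi_algebraic (q : ℚ) : IsAlgebraic ℚ (Real.cos (π * q)) := by
  have hden : ((q.den : ℝ)) * (q : ℝ) = (q.num : ℝ) := by
    rw [mul_comm]; exact_mod_cast congrArg (Rat.cast (K := ℝ)) (Rat.mul_den_eq_num q)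
  set n : ℤ := (q.den : ℤ) with hn
  have hn0 : (n : ℝ) ≠ 0 := Int.cast_ne_zero.mpr (by rw [hn]; exact_mod_cast q.den_nz)
  set c : ℚ := (-1) ^ q.num with hc
  refine ⟨Polynomial.Chebyshev.T ℚ n - Polynomial.C c, ?_, ?_⟩
  · intro h
    have hTC : Polynomial.Chebyshev.T ℚ n = Polynomial.C c := sub_eq_zero.mp h
    have h' : Polynomial.Chebyshev.T ℝ n = Polynomial.C (c : ℝ) := by
      have := congrArg (Polynomial.map (algebraMap ℚ ℝ)) hTC
      simpa [Polynomial.Chebyshev.map_T] using this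
    have h1 : (1 : ℝ) = (c : ℝ) := by
      have := congrArg (Polynomial.eval (Real.cos 0)) h'
      rw [Polynomial.Chebyshev.T_real_cos] at this
      simpa using this
    have h2 : (-1 : ℝ) = (c : ℝ) := by
      have := congrArg (Polynomial.eval (Real.cos (π / n))) h'
      rw [Polynomial.Chebyshev.T_real_cos, mul_div_cancel₀ _ hn0] at this
      simpa using this
    rw [← h1] at h2; norm_num at h2
  · have key : (n : ℝ) * (π * q) = (q.num : ℝ) * π := by
      push_cast [hn]
      rw [show (q.den : ℝ) * (π * q) = π * ((q.den : ℝ) * q) by ring, hden]; ring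
    rw [map_sub, aeval_chebT, Polynomial.Chebyshev.T_real_cos, key, Polynomial.aeval_C]
    have : Real.cos ((q.num : ℝ) * π) = (-1 : ℝ) ^ q.num := by
      simpa using Real.cos_int_mul_pi_sub 0 q.num
    rw [this, hc]
    push_cast
    ring

/-- The sine of any rational multiple of `π` is algebraic. -/
theorem sin_rat_mul_pi_algebraic (q : ℚ) : IsAlgebraic ℚ (Real.sin (π * q)) := by
  have hc := (isAlgebraic_iff_isIntegral).mp (cos_rat_mul_pi_algebraic q)
  have hs2 : IsIntegral ℚ (Real.sin (π * q) ^ 2) := by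
    rw [Real.sin_sq]
    exact isIntegral_one.sub (hc.pow 2)
  exact (isAlgebraic_iff_isIntegral).mpr (hs2.of_pow two_pos)
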